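/- arXiv:2505.11573 — 2 statements merged into one kernel-verified Lean document; each statement's English description precedes it below -/
import Mathlib

section
/- Under the hypotheses of the previous setting (ψ unital potential, μ invariant for the dual of L_ψ), for all f, g ∈ C(X) and all n ≥ 1: ∫ L_ψⁿ(f)(σⁿ(x)) g(x) dμ(x) = ∫ f(x) L_ψⁿ(g)(σⁿ(x)) dμ(x). Equivalently, the operator E_n := πⁿ ∘ L_ψⁿ is self-adjoint with respect to the bilinear pairing (f,g) ↦ ∫ f g dμ. -/
/-!
Both sides equal `∫ Lⁿf · Lⁿg dμ`. Indeed `L_ψ` satisfies the projection formula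
`L_ψ((F ∘ σ) · G) = F · L_ψ G`, so `∫ F(σⁿ x) G(x) dμ = ∫ Lⁿ((F ∘ σⁿ) · G) dμ = ∫ F · LⁿG dμ`
by invariance of `μ`; invariance applies because `L_ψ` preserves continuity, `σ` being a
finite covering map.
-/

open MeasureTheory

/-- The transfer operator with potential `ψ`. -/
noncomputable def Lpsi {X : Type*} (σ : X → X) (ψ : X → ℝ) (f : X → ℂ) : X → ℂ :=
  fun x => ∑' y : (σ ⁻¹' {x} : Set X), (ψ (y : X) : ℂ) * f (y : X)

theorem IsEvenlyCovered.continuousAt_tsum_fiber {E X I M : Type*} [TopologicalSpace E]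
    [TopologicalSpace X] [TopologicalSpace I] [Finite I] [AddCommMonoid M] [TopologicalSpace M]
    [ContinuousAdd M] {f : E → X} {x : X} (h : IsEvenlyCovered f x I) {φ : E → M}
    (hφ : Continuous φ) : ContinuousAt (fun x' => ∑' y : (f ⁻¹' {x'} : Set E), φ y) x := by
  obtain ⟨-, U, hxU, hU, -, H, hH⟩ := h
  have := Fintype.ofFinite I
  have hmem (u : U) (y : (f ⁻¹' {(u : X)} : Set E)) : (y : E) ∈ f ⁻¹' U := by
    rw [Set.mem_preimage, y.2.out]
    exact u.2
  let fiberEquiv (u : U) : I ≃ (f ⁻¹' {(u : X)} : Set E) :=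
    { toFun i := ⟨H.symm (u, i), by simp [← hH]⟩
      invFun y := (H ⟨y, hmem u y⟩).2
      left_inv i := by simp
      right_inv y := by
        have hy : (H ⟨y, hmem u y⟩).1 = u := Subtype.ext ((hH _).trans y.2.out)
        ext
        simp [← hy] }
  have hsum (u : U) : ∑' y : (f ⁻¹' {(u : X)} : Set E), φ y = ∑ i, φ (H.symm (u, i)) := by
    rw [← (fiberEquiv u).tsum_eq, tsum_fintype]
    rfl
  refine ContinuousOn.continuousAt ?_ (hU.mem_nhds hxU)
  rw [continuousOn_iff_continuous_domRestrict]
  convert (show Continuous fun u : U => ∑ i, φ (H.symm (u, i)) by fun_prop) using 1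
  exact funext hsum

section LocalHomeomorph

variable {E X : Type*} [TopologicalSpace E] [TopologicalSpace X] [CompactSpace E]
  {f : E → X} (hf : IsLocalHomeomorph f) (x : X)
include hf

theorem IsLocalHomeomorph.finite_preimage_singleton [T1Space X] : (f ⁻¹' {x}).Finite :=
  (isClosed_singleton.preimage hf.continuous).isCompact.finite <|
    IsDiscrete.of_openPartialHomeomorph f subset_rfl fun e _ =>
      (hf e).imp fun _ he => ⟨he.1, he.2.symm⟩

theorem IsLocalHomeomorph.isEvenlyCovered [T2Space E] [T2Space X] :
    IsEvenlyCovered f x (f ⁻¹' {x}) :=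
  IsEvenlyCovered.of_openPartialHomeomorph hf.continuous fun e _ =>
    (hf e).imp fun _ he => ⟨he.1, he.2.symm⟩

end LocalHomeomorph

section TransferOperator

variable {X : Type*} [TopologicalSpace X] [CompactSpace X] [T2Space X] {σ : X → X}

theorem continuous_Lpsi (hloc : IsLocalHomeomorph σ) {ψ : X → ℝ} (hψ : Continuous ψ)
    {f : X → ℂ} (hf : Continuous f) : Continuous (Lpsi σ ψ f) :=
  continuous_iff_continuousAt.2 fun x =>
    have := (hloc.finite_preimage_singleton x).to_subtype
    (hloc.isEvenlyCovered x).continuousAt_tsum_fiber (φ := fun y => (ψ y : ℂ) * f y)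
      (by fun_prop)

theorem continuous_Lpsi_iterate (hloc : IsLocalHomeomorph σ) {ψ : X → ℝ} (hψ : Continuous ψ)
    {f : X → ℂ} (hf : Continuous f) (n : ℕ) : Continuous ((Lpsi σ ψ)^[n] f) := by
  induction n with
  | zero => exact hf
  | succ n ih => rw [Function.iterate_succ_apply']; exact continuous_Lpsi hloc hψ ih

end TransferOperator

theorem Lpsi_comp_mul {X : Type*} (σ : X → X) (ψ : X → ℝ) (F G : X → ℂ) :
    Lpsi σ ψ (fun z => F (σ z) * G z) = fun x => F x * Lpsi σ ψ G x := by
  funext x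
  simp only [Lpsi, ← tsum_mul_left]
  refine tsum_congr fun y => ?_
  rw [show σ y = x from y.2]
  ring

theorem Lpsi_iterate_comp_mul {X : Type*} (σ : X → X) (ψ : X → ℝ) (F G : X → ℂ) (n : ℕ) :
    (Lpsi σ ψ)^[n] (fun z => F (σ^[n] z) * G z) = fun x => F x * (Lpsi σ ψ)^[n] G x := by
  induction n generalizing F with
  | zero => rfl
  | succ n ih =>
    simp only [Function.iterate_succ_apply']
    rw [ih (fun z => F (σ z)), Lpsi_comp_mul]

section Invariance

variable {X : Type*} [TopologicalSpace X] [CompactSpace X] [T2Space X] [MeasurableSpace X]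
  {σ : X → X} (hloc : IsLocalHomeomorph σ) {ψ : X → ℝ} (hψ : Continuous ψ) {μ : Measure X}
  (hinv : ∀ f : X → ℂ, Continuous f → ∫ x, Lpsi σ ψ f x ∂μ = ∫ x, f x ∂μ)
include hloc hψ hinv

theorem integral_Lpsi_iterate {f : X → ℂ} (hf : Continuous f) (n : ℕ) :
    ∫ x, (Lpsi σ ψ)^[n] f x ∂μ = ∫ x, f x ∂μ := by
  induction n generalizing f with
  | zero => rfl
  | succ n ih =>
    rw [Function.iterate_succ_apply, ih (continuous_Lpsi hloc hψ hf), hinv f hf]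

theorem integral_comp_iterate_mul {F G : X → ℂ} (hF : Continuous F) (hG : Continuous G)
    (n : ℕ) : ∫ x, F (σ^[n] x) * G x ∂μ = ∫ x, F x * (Lpsi σ ψ)^[n] G x ∂μ := by
  have hFG : Continuous fun x => F (σ^[n] x) * G x :=
    (hF.comp (hloc.continuous.iterate n)).mul hG
  rw [← integral_Lpsi_iterate hloc hψ hinv hFG, Lpsi_iterate_comp_mul]

end Invariance

theorem integral_selfadjoint_expectation_general {X : Type*} [TopologicalSpace X] [CompactSpace X]
    [T2Space X] [MeasurableSpace X]
    (σ : X → X) (hloc : IsLocalHomeomorph σ)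
    (ψ : X → ℝ) (hψc : Continuous ψ)
    (μ : Measure X)
    (hinv : ∀ f : X → ℂ, Continuous f → ∫ x, Lpsi σ ψ f x ∂μ = ∫ x, f x ∂μ)
    (f g : X → ℂ) (hf : Continuous f) (hg : Continuous g) (n : ℕ) :
    ∫ x, (Lpsi σ ψ)^[n] f (σ^[n] x) * g x ∂μ
      = ∫ x, f x * (Lpsi σ ψ)^[n] g (σ^[n] x) ∂μ := by
  have hLf := continuous_Lpsi_iterate hloc hψc hf n
  have hLg := continuous_Lpsi_iterate hloc hψc hg n
  calc ∫ x, (Lpsi σ ψ)^[n] f (σ^[n] x) * g x ∂μ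
      = ∫ x, (Lpsi σ ψ)^[n] f x * (Lpsi σ ψ)^[n] g x ∂μ :=
        integral_comp_iterate_mul hloc hψc hinv hLf hg n
    _ = ∫ x, (Lpsi σ ψ)^[n] g (σ^[n] x) * f x ∂μ := by
        simp_rw [mul_comm ((Lpsi σ ψ)^[n] f _)]
        exact (integral_comp_iterate_mul hloc hψc hinv hLg hf n).symm
    _ = ∫ x, f x * (Lpsi σ ψ)^[n] g (σ^[n] x) ∂μ := by simp_rw [mul_comm]

/-- If `ψ` is a unital potential and `μ` is invariant for the dual of `L_ψ`, then
`∫ L_ψⁿ(f)(σⁿ x) g(x) dμ = ∫ f(x) L_ψⁿ(g)(σⁿ x) dμ`, i.e. the conditional expectation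
`E_n = πⁿ ∘ L_ψⁿ` is self-adjoint for the pairing `(f,g) ↦ ∫ f g dμ`. -/
theorem integral_selfadjoint_expectation {X : Type*} [TopologicalSpace X] [CompactSpace X]
    [T2Space X] [MeasurableSpace X] [BorelSpace X]
    (σ : X → X) (hloc : IsLocalHomeomorph σ) (hsurj : Function.Surjective σ)
    (ψ : X → ℝ) (hψc : Continuous ψ) (hψ0 : ∀ x, 0 ≤ ψ x)
    (hunital : ∀ x : X, ∑' y : (σ ⁻¹' {x} : Set X), ψ (y : X) = 1)
    (μ : Measure X) [IsProbabilityMeasure μ]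
    (hinv : ∀ f : X → ℂ, Continuous f → ∫ x, Lpsi σ ψ f x ∂μ = ∫ x, f x ∂μ)
    (f g : X → ℂ) (hf : Continuous f) (hg : Continuous g) (n : ℕ) (hn : 1 ≤ n) :
    ∫ x, (Lpsi σ ψ)^[n] f (σ^[n] x) * g x ∂μ
      = ∫ x, f x * (Lpsi σ ψ)^[n] g (σ^[n] x) ∂μ :=
  integral_selfadjoint_expectation_general σ hloc ψ hψc μ hinv f g hf hg n
end

section
/- Let D be a normalized potential for the surjective local homeomorphism σ on the compact Hausdorff space X, with transfer operator L_D and Kolmogorov measures ν^D_x on X_∞. Then for every continuous f on X_∞ and every x ∈ X: ∑_{σ(z)=x} D(z) ∫_{X_∞} f(σ_∞(ẑ)) dν^D_z(ẑ) = ∫_{X_∞} f(x̂) dν^D_x(x̂). Equivalently, L_D ∘ ν^D ∘ π_∞ = ν^D as maps C(X_∞) → C(X), where π_∞(f) = f ∘ σ_∞ and ν^D(f)(x) = ∫ f dν^D_x. -/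
open Filter Topology MeasureTheory

/-- The projective limit `X_∞ = {(x₀,x₁,…) : σ (x_{n+1}) = x_n}`. -/
abbrev Xinf {X : Type*} (σ : X → X) : Type _ := {f : ℕ → X // ∀ n, σ (f (n + 1)) = f n}

/-- The projection `p : X_∞ → X` onto the zeroth coordinate. -/
def pInf {X : Type*} (σ : X → X) (xh : Xinf σ) : X := xh.val 0

/-- The map `σ_∞(x₀,x₁,…) = (σ x₀, x₀, x₁, …)` on the projective limit. -/
def sigmaInf {X : Type*} (σ : X → X) (xh : Xinf σ) : Xinf σ :=
  ⟨fun n => match n with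
    | 0 => σ (xh.val 0)
    | k + 1 => xh.val k,
   by intro n; cases n with
      | zero => rfl
      | succ k => exact xh.prop k⟩

/-- The shift `(x₀,x₁,x₂,…) ↦ (x₁,x₂,…)` on the projective limit. -/
def shiftInf {X : Type*} (σ : X → X) (xh : Xinf σ) : Xinf σ :=
  ⟨fun n => xh.val (n + 1), fun n => xh.prop (n + 1)⟩

/-- Nested transfer operators: `nestedT σ D [f₁,…,f_n] = L_D(f₁ · L_D(f₂ ⋯ L_D(f_n)⋯))`. -/
noncomputable def nestedT {X : Type*} (σ : X → X) (D : X → ℝ) : List (X → ℂ) → X → ℂ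
  | [] => fun _ => 1
  | f :: rest => fun x =>
      ∑' y : (σ ⁻¹' {x} : Set X), (D (y : X) : ℂ) * (f (y : X) * nestedT σ D rest (y : X))

/-! Both sides depend continuously on `f ∈ C(X_∞, ℂ)`: the fibres of the local homeomorphism `σ`
are finite, so the left side is a finite sum of integrals against finite measures. Since
`(σ_∞ ẑ)_{n+1} = ẑ_n`, on a function `h(x_{n+1})` of one coordinate the identity is one step of the
cylinder formula. These functions form a point-separating star subalgebra of `C(X_∞, ℂ)`, which is
dense by Stone–Weierstrass. -/

theorem IsLocalHomeomorph.finite_preimage_singleton_s18 {X Y : Type*} [TopologicalSpace X]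
    [CompactSpace X] [TopologicalSpace Y] [T1Space Y] {f : X → Y} (hf : IsLocalHomeomorph f)
    (y : Y) : (f ⁻¹' {y}).Finite := by
  have hdisc : IsDiscrete (f ⁻¹' {y}) :=
    (hf.isLocalHomeomorphOn.mono (Set.subset_univ _)).isDiscrete_of_image
      (Set.subsingleton_singleton.anti (Set.image_preimage_subset f {y})).isDiscrete
  exact (isClosed_singleton.preimage hf.continuous).isCompact.finite hdisc

theorem ContinuousMap.measurable_of_mem_closure {K E : Type*} [TopologicalSpace K]
    [CompactSpace K] [MeasurableSpace K] [NormedAddCommGroup E] [MeasurableSpace E]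
    [BorelSpace E] {s : Set C(K, E)} (hs : ∀ g ∈ s, Measurable g) {g : C(K, E)}
    (hg : g ∈ closure s) : Measurable g := by
  obtain ⟨u, hus, hu⟩ := mem_closure_iff_seq_limit.mp hg
  exact measurable_of_tendsto_metrizable (fun n => hs _ (hus n))
    (tendsto_pi_nhds.mpr fun k => ((continuous_eval_const k).tendsto g).comp hu)

theorem ContinuousMap.continuous_integral_of_aestronglyMeasurable {K E : Type*}
    [TopologicalSpace K] [CompactSpace K] [MeasurableSpace K] [NormedAddCommGroup E]
    [NormedSpace ℝ E] (μ : Measure K) [IsFiniteMeasure μ]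
    (hmeas : ∀ g : C(K, E), AEStronglyMeasurable g μ) :
    Continuous fun g : C(K, E) => ∫ k, g k ∂μ := by
  have hint (g : C(K, E)) : Integrable g μ :=
    .of_bound (hmeas g) ‖g‖ (ae_of_all _ g.norm_coe_le_norm)
  refine (LipschitzWith.of_dist_le_mul (K := (μ.real Set.univ).toNNReal)
    fun g g' => ?_).continuous
  rw [dist_eq_norm, dist_eq_norm, ← integral_sub (hint g) (hint g'),
    Real.coe_toNNReal _ measureReal_nonneg, mul_comm]
  exact norm_integral_le_of_norm_le_const (ae_of_all _ (g - g').norm_coe_le_norm)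

section ProjectiveLimit

variable {X : Type*} [TopologicalSpace X] {σ : X → X}

theorem compactSpace_Xinf [CompactSpace X] [T2Space X] (hσ : Continuous σ) :
    CompactSpace (Xinf σ) :=
  isCompact_iff_compactSpace.mp <| by
    change IsCompact {g : ℕ → X | ∀ n, σ (g (n + 1)) = g n}
    rw [Set.ofPred_forall]
    exact (isClosed_iInter fun n =>
      isClosed_eq (hσ.comp (continuous_apply _)) (continuous_apply n)).isCompact

theorem continuous_sigmaInf (hσ : Continuous σ) : Continuous (sigmaInf σ) := by
  refine .subtype_mk (continuous_pi fun n => ?_) _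
  cases n with
  | zero => exact hσ.comp ((continuous_apply 0).comp continuous_subtype_val)
  | succ k => exact (continuous_apply k).comp continuous_subtype_val

variable (σ) in
def coordInf (n : ℕ) : C(Xinf σ, X) :=
  ⟨fun xh => xh.val n, (continuous_apply n).comp continuous_subtype_val⟩

theorem comp_coordInf_succ {Y : Type*} [TopologicalSpace Y] (hσ : Continuous σ) (h : C(X, Y))
    (n : ℕ) : (h.comp ⟨σ, hσ⟩).comp (coordInf σ (n + 1)) = h.comp (coordInf σ n) := by
  ext xh
  exact congrArg h (xh.prop n)

variable (σ) in
/-- Continuous functions of finitely many coordinates: since `x_i = σ^[n-i] x_n`, these are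
the functions `h(x_n)`. -/
noncomputable def cylinderAlgebra : StarSubalgebra ℂ C(Xinf σ, ℂ) :=
  ⨆ n, (ContinuousMap.compStarAlgHom' ℂ ℂ (coordInf σ n)).range

theorem exists_eq_comp_coordInf_succ (hσ : Continuous σ) {g : C(Xinf σ, ℂ)}
    (hg : g ∈ cylinderAlgebra σ) :
    ∃ (n : ℕ) (h : C(X, ℂ)), h.comp (coordInf σ (n + 1)) = g := by
  have hmono : Monotone fun n => (ContinuousMap.compStarAlgHom' ℂ ℂ (coordInf σ n)).range :=
    monotone_nat_of_le_succ fun n => by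
      rintro _ ⟨h, rfl⟩
      exact ⟨h.comp ⟨σ, hσ⟩, comp_coordInf_succ hσ h n⟩
  rw [cylinderAlgebra, ← SetLike.mem_coe, StarSubalgebra.coe_iSup_of_directed hmono.directed_le,
    Set.mem_iUnion] at hg
  obtain ⟨n, h, rfl⟩ := hg
  exact ⟨n, h.comp ⟨σ, hσ⟩, comp_coordInf_succ hσ h n⟩

theorem cylinderAlgebra_separatesPoints [CompactSpace X] [T2Space X] :
    (cylinderAlgebra σ).SeparatesPoints := by
  intro xh yh hne
  obtain ⟨k, hk⟩ : ∃ k, xh.val k ≠ yh.val k := by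
    by_contra! h
    exact hne (Subtype.ext (funext h))
  obtain ⟨φ, hφx, hφy, -⟩ := exists_continuous_zero_one_of_isClosed isClosed_singleton
    isClosed_singleton (Set.disjoint_singleton.mpr hk)
  let ψ : C(X, ℂ) := ⟨fun y => (φ y : ℂ), Complex.continuous_ofReal.comp φ.continuous⟩
  refine ⟨_, ⟨ψ.comp (coordInf σ k), ?_, rfl⟩, ?_⟩
  · exact (le_iSup (fun n => (ContinuousMap.compStarAlgHom' ℂ ℂ (coordInf σ n)).range) k)
      ⟨_, rfl⟩
  · simp [ψ, coordInf, hφx rfl, hφy rfl]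

theorem dense_cylinderAlgebra [CompactSpace X] [T2Space X] (hσ : Continuous σ) :
    Dense (cylinderAlgebra σ : Set C(Xinf σ, ℂ)) := by
  have := compactSpace_Xinf hσ
  rw [dense_iff_closure_eq, ← StarSubalgebra.topologicalClosure_coe,
    ContinuousMap.starSubalgebra_topologicalClosure_eq_top_of_separatesPoints _
      cylinderAlgebra_separatesPoints, StarSubalgebra.coe_top]

end ProjectiveLimit

/-- Without second countability of `X`, the product σ-algebra on `X_∞` need not contain the open
sets; continuous functions are measurable all the same, as uniform limits of cylinder functions. -/
theorem measurable_continuousMap_Xinf {X : Type*} [TopologicalSpace X] [CompactSpace X]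
    [T2Space X] [MeasurableSpace X] [OpensMeasurableSpace X] {σ : X → X} (hσ : Continuous σ)
    (g : C(Xinf σ, ℂ)) : Measurable g := by
  have := compactSpace_Xinf hσ
  refine g.measurable_of_mem_closure (fun g hg => ?_) (dense_cylinderAlgebra hσ g)
  obtain ⟨n, h, rfl⟩ := exists_eq_comp_coordInf_succ hσ hg
  exact h.continuous.measurable.comp ((measurable_pi_apply _).comp measurable_subtype_coe)

section Kolmogorov

variable {X : Type*} [TopologicalSpace X] [MeasurableSpace X] {σ : X → X} {D : X → ℝ}
  {ν : X → Measure (Xinf σ)}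

variable (σ D ν) in
def IsKolmogorovFamily : Prop :=
  ∀ (x : X) (n : ℕ) (f : ℕ → X → ℂ), (∀ i, Continuous (f i)) →
    ∫ xh, ∏ i ∈ Finset.range (n + 1), f i (xh.val i) ∂(ν x)
      = f 0 x * nestedT σ D (List.ofFn (fun i : Fin n => f (i.val + 1))) x

theorem IsKolmogorovFamily.integral_prod_range_succ_succ (hν : IsKolmogorovFamily σ D ν)
    {f : ℕ → X → ℂ} (hf : ∀ i, Continuous (f i)) (n : ℕ) (x : X) :
    ∫ xh, ∏ i ∈ Finset.range (n + 2), f i (xh.val i) ∂(ν x)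
      = f 0 x * ∑' z : (σ ⁻¹' {x} : Set X),
          (D z : ℂ) * ∫ zh, ∏ i ∈ Finset.range (n + 1), f (i + 1) (zh.val i) ∂(ν z) := by
  rw [hν x (n + 1) f hf, List.ofFn_succ, nestedT]
  congr 1
  refine tsum_congr fun z => ?_
  rw [hν z n _ fun i => hf (i + 1)]
  simp [Fin.val_succ]

theorem IsKolmogorovFamily.tsum_integral_comp_coord (hν : IsKolmogorovFamily σ D ν)
    {h : X → ℂ} (hh : Continuous h) (k : ℕ) (x : X) :
    ∑' z : (σ ⁻¹' {x} : Set X), (D z : ℂ) * ∫ zh, h (zh.val k) ∂(ν z)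
      = ∫ xh, h (xh.val (k + 1)) ∂(ν x) := by
  classical
  have hf (i : ℕ) : Continuous (if i = k + 1 then h else 1) := by
    split_ifs
    exacts [hh, continuous_const]
  simpa [ite_apply, Finset.prod_ite_eq'] using (hν.integral_prod_range_succ_succ hf k x).symm

end Kolmogorov

theorem transfer_kolmogorov_invariance_general {X : Type*} [TopologicalSpace X] [CompactSpace X]
    [T2Space X] [MeasurableSpace X] [BorelSpace X]
    (σ : X → X) (hloc : IsLocalHomeomorph σ)
    (D : X → ℝ)
    (ν : X → Measure (Xinf σ)) (hprob : ∀ x, IsProbabilityMeasure (ν x))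
    (hKol : ∀ (x : X) (n : ℕ) (f : ℕ → X → ℂ), (∀ i, Continuous (f i)) →
      ∫ xh, ∏ i ∈ Finset.range (n + 1), f i (xh.val i) ∂(ν x)
        = f 0 x * nestedT σ D (List.ofFn (fun i : Fin n => f (i.val + 1))) x)
    (f : Xinf σ → ℂ) (hf : Continuous f) (x : X) :
    ∑' z : (σ ⁻¹' {x} : Set X), (D (z : X) : ℂ) * ∫ zh, f (sigmaInf σ zh) ∂(ν (z : X))
      = ∫ xh, f xh ∂(ν x) := by
  have hσ := hloc.continuous
  have := compactSpace_Xinf hσ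
  have hint (y : X) : Continuous fun g : C(Xinf σ, ℂ) => ∫ xh, g xh ∂(ν y) :=
    ContinuousMap.continuous_integral_of_aestronglyMeasurable (ν y) fun g =>
      (measurable_continuousMap_Xinf hσ g).aestronglyMeasurable
  have hlhs : Continuous fun g : C(Xinf σ, ℂ) =>
      ∑' z : (σ ⁻¹' {x} : Set X), (D z : ℂ) * ∫ zh, g (sigmaInf σ zh) ∂(ν z) := by
    have := (hloc.finite_preimage_singleton_s18 x).fintype
    simp_rw [tsum_fintype]
    exact continuous_finsetSum _ fun z _ => continuous_const.mul
      ((hint z).comp (ContinuousMap.continuous_precomp ⟨_, continuous_sigmaInf hσ⟩))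
  have heq := hlhs.ext_on (dense_cylinderAlgebra hσ) (hint x) fun g hg => by
    obtain ⟨n, h, rfl⟩ := exists_eq_comp_coordInf_succ hσ hg
    exact IsKolmogorovFamily.tsum_integral_comp_coord hKol h.continuous n x
  exact congrFun heq ⟨f, hf⟩

/-- Let `D` be a normalized potential and `{ν_x}` the Kolmogorov family of probability
measures on `X_∞` determined by `D` (characterized by the cylinder formula
`∫ f₀(x̂₀)⋯f_n(x̂_n) dν_x = f₀(x)·L_D(f₁·L_D(f₂⋯L_D(f_n)⋯))(x)`). Then for every continuous
`f` on `X_∞` and every `x`: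
`∑_{σ z = x} D(z) ∫ f ∘ σ_∞ dν_z = ∫ f dν_x`, i.e. `L_D ∘ ν^D ∘ π_∞ = ν^D`. -/
theorem transfer_kolmogorov_invariance {X : Type*} [TopologicalSpace X] [CompactSpace X]
    [T2Space X] [MeasurableSpace X] [BorelSpace X]
    (σ : X → X) (hloc : IsLocalHomeomorph σ) (hsurj : Function.Surjective σ)
    (D : X → ℝ) (hDc : Continuous D) (hD0 : ∀ x, 0 ≤ D x)
    (hDnorm : ∀ x : X, ∑' y : (σ ⁻¹' {x} : Set X), D (y : X) = 1)
    (ν : X → Measure (Xinf σ)) (hprob : ∀ x, IsProbabilityMeasure (ν x))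
    (hKol : ∀ (x : X) (n : ℕ) (f : ℕ → X → ℂ), (∀ i, Continuous (f i)) →
      ∫ xh, ∏ i ∈ Finset.range (n + 1), f i (xh.val i) ∂(ν x)
        = f 0 x * nestedT σ D (List.ofFn (fun i : Fin n => f (i.val + 1))) x)
    (f : Xinf σ → ℂ) (hf : Continuous f) (x : X) :
    ∑' z : (σ ⁻¹' {x} : Set X), (D (z : X) : ℂ) * ∫ zh, f (sigmaInf σ zh) ∂(ν (z : X))
      = ∫ xh, f xh ∂(ν x) :=
  transfer_kolmogorov_invariance_general σ hloc D ν hprob hKol f hf x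
end
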